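/- Let T^k ⊆ {1,…,n} with |T^k| = Lk and δ_{Lk+1} ≤ δ_{Lk} such that δ_{Lk} < 1. Then for any index i ∉ T^k, the projection of φ_i onto span(Φ_{T^k}) satisfies ‖P_{T^k} φ_i‖₂² ≤ δ_{Lk+1}² / (1 − δ_{Lk}). -/

import Mathlib

/-!
With `A = Φ_T`, `v = Aᵀ φᵢ` and `w = (AᵀA)⁻¹ v` we have `P_T φᵢ = A w`, so
`‖P_T φᵢ‖² = ‖A w‖² = ⟪w, v⟫`. The lower RIP bound of order `|T|` gives
`(1 - δ_{Lk}) ‖w‖² ≤ ‖A w‖² = ⟪w, v⟫`, and Cauchy–Schwarz turns this into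
`⟪w, v⟫ ≤ ‖v‖² / (1 - δ_{Lk})`. Finally the entries of `v` are the correlations `⟪φⱼ, φᵢ⟫`,
`j ∈ T`, and polarizing the RIP of order `Lk + 1` on the disjointly supported vectors `v` (on `T`)
and a multiple of `eᵢ` gives `‖v‖ ≤ δ_{Lk+1}`.
-/

open Finset Matrix

/-- Squared-entries `ℓ₂` norm of a finite real vector. -/
noncomputable def l2 {ι : Type*} [Fintype ι] (x : ι → ℝ) : ℝ :=
  Real.sqrt (∑ i, x i ^ 2)

/-- A vector is `K`-sparse if it has at most `K` nonzero entries. -/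
def Ksparse {n : ℕ} (K : ℕ) (x : Fin n → ℝ) : Prop :=
  (Finset.univ.filter (fun i => x i ≠ 0)).card ≤ K

/-- `δ` is a valid restricted isometry constant of order `K` for `Φ`. -/
def RIP {m n : ℕ} (Φ : Matrix (Fin m) (Fin n) ℝ) (K : ℕ) (δ : ℝ) : Prop :=
  ∀ x : Fin n → ℝ, Ksparse K x →
    (1 - δ) * ∑ i, x i ^ 2 ≤ ∑ i, (Φ.mulVec x) i ^ 2 ∧
    ∑ i, (Φ.mulVec x) i ^ 2 ≤ (1 + δ) * ∑ i, x i ^ 2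

/-- Column submatrix `Φ_S`. -/
def colSub {m n : ℕ} (Φ : Matrix (Fin m) (Fin n) ℝ) (S : Finset (Fin n)) :
    Matrix (Fin m) S ℝ := fun r c => Φ r c

/-- Gram matrix `Φ_S' Φ_S`. -/
noncomputable def gram {m n : ℕ} (Φ : Matrix (Fin m) (Fin n) ℝ) (S : Finset (Fin n)) :
    Matrix S S ℝ := (colSub Φ S)ᵀ * colSub Φ S

/-- Pseudoinverse `Φ_S^† = (Φ_S'Φ_S)⁻¹ Φ_S'` (for `Φ_S` of full column rank). -/
noncomputable def pinv {m n : ℕ} (Φ : Matrix (Fin m) (Fin n) ℝ) (S : Finset (Fin n)) :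
    Matrix S (Fin m) ℝ := (gram Φ S)⁻¹ * (colSub Φ S)ᵀ

/-- Projection `P_S = Φ_S Φ_S^†` onto the span of the columns of `Φ_S`. -/
noncomputable def proj {m n : ℕ} (Φ : Matrix (Fin m) (Fin n) ℝ) (S : Finset (Fin n)) :
    Matrix (Fin m) (Fin m) ℝ := colSub Φ S * pinv Φ S

/-- Projection `P_S^⊥ = I - P_S`. -/
noncomputable def projPerp {m n : ℕ} (Φ : Matrix (Fin m) (Fin n) ℝ) (S : Finset (Fin n)) :
    Matrix (Fin m) (Fin m) ℝ := 1 - proj Φ S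

section ExtendByZero

variable {ι : Type*} [DecidableEq ι]

def extendByZero (S : Finset ι) (y : S → ℝ) : ι → ℝ :=
  fun j => if h : j ∈ S then y ⟨j, h⟩ else 0

lemma extendByZero_of_notMem {S : Finset ι} (y : S → ℝ) {j : ι} (hj : j ∉ S) :
    extendByZero S y j = 0 := by
  simp [extendByZero, hj]

lemma dotProduct_extendByZero [Fintype ι] (S : Finset ι) (f : ι → ℝ) (y : S → ℝ) :
    f ⬝ᵥ extendByZero S y = (fun c : S => f c) ⬝ᵥ y := by
  simp only [dotProduct]
  rw [← Finset.sum_subset (Finset.subset_univ S) fun j _ hj => by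
    rw [extendByZero_of_notMem y hj, mul_zero], ← Finset.sum_coe_sort S]
  simp [extendByZero]

lemma extendByZero_dotProduct_self [Fintype ι] (S : Finset ι) (y : S → ℝ) :
    extendByZero S y ⬝ᵥ extendByZero S y = y ⬝ᵥ y := by
  rw [dotProduct_extendByZero]
  congr 1
  funext c
  simp [extendByZero]

end ExtendByZero

lemma sum_sq_eq_dotProduct_self {ι : Type*} [Fintype ι] (x : ι → ℝ) :
    ∑ i, x i ^ 2 = x ⬝ᵥ x := by
  simp [dotProduct, sq]

lemma l2_sq {ι : Type*} [Fintype ι] (x : ι → ℝ) : l2 x ^ 2 = x ⬝ᵥ x := by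
  rw [l2, Real.sq_sqrt (Finset.sum_nonneg fun i _ => sq_nonneg (x i)), sum_sq_eq_dotProduct_self]

lemma ksparse_of_eq_zero_of_notMem {n K : ℕ} {x : Fin n → ℝ} (S : Finset (Fin n))
    (hS : S.card ≤ K) (hx : ∀ j ∉ S, x j = 0) : Ksparse K x :=
  (Finset.card_le_card fun j hj => by
    by_contra hjS
    exact (Finset.mem_filter.1 hj).2 (hx j hjS)).trans hS

lemma mulVec_extendByZero {m n : ℕ} (Φ : Matrix (Fin m) (Fin n) ℝ) (S : Finset (Fin n))
    (y : S → ℝ) : Φ *ᵥ extendByZero S y = colSub Φ S *ᵥ y :=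
  funext fun r => dotProduct_extendByZero S (Φ r) y

lemma dotProduct_le_dotProduct_self_div {ι : Type*} [Fintype ι] {v w : ι → ℝ} {c : ℝ}
    (hc : 0 < c) (h : c * (w ⬝ᵥ w) ≤ w ⬝ᵥ v) : w ⬝ᵥ v ≤ v ⬝ᵥ v / c := by
  have hCS : (w ⬝ᵥ v) ^ 2 ≤ (w ⬝ᵥ w) * (v ⬝ᵥ v) := by
    have := Finset.sum_mul_sq_le_sq_mul_sq Finset.univ w v
    rwa [sum_sq_eq_dotProduct_self, sum_sq_eq_dotProduct_self] at this
  have hw : 0 ≤ w ⬝ᵥ w := by simpa using dotProduct_star_self_nonneg w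
  have hv : 0 ≤ v ⬝ᵥ v := by simpa using dotProduct_star_self_nonneg v
  have hp : 0 ≤ w ⬝ᵥ v := (mul_nonneg hc.le hw).trans h
  have hcp : c * (w ⬝ᵥ v) * (w ⬝ᵥ v) ≤ v ⬝ᵥ v * (w ⬝ᵥ v) := by nlinarith
  rw [le_div_iff₀ hc]
  rcases hp.eq_or_lt with hp0 | hppos
  · rw [← hp0, zero_mul]
    exact hv
  · linarith [le_of_mul_le_mul_right hcp hppos]

lemma mulVec_dotProduct_mulVec {m ι : Type*} [Fintype m] [Fintype ι] (A : Matrix m ι ℝ)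
    (x y : ι → ℝ) : (A *ᵥ x) ⬝ᵥ (A *ᵥ y) = x ⬝ᵥ ((Aᵀ * A) *ᵥ y) := by
  rw [← mulVec_mulVec, dotProduct_comm, dotProduct_mulVec, ← mulVec_transpose, dotProduct_comm]

section RIP

variable {m n K : ℕ} {Φ : Matrix (Fin m) (Fin n) ℝ} {δ : ℝ}

lemma RIP.lower_colSub (h : RIP Φ K δ) {S : Finset (Fin n)} (hS : S.card ≤ K) (y : S → ℝ) :
    (1 - δ) * (y ⬝ᵥ y) ≤ (colSub Φ S *ᵥ y) ⬝ᵥ (colSub Φ S *ᵥ y) := by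
  have := (h (extendByZero S y) (ksparse_of_eq_zero_of_notMem S hS
    fun j hj => extendByZero_of_notMem y hj)).1
  rwa [sum_sq_eq_dotProduct_self, sum_sq_eq_dotProduct_self, extendByZero_dotProduct_self,
    mulVec_extendByZero] at this

lemma RIP.isUnit_det_gram (h : RIP Φ K δ) (hδ : δ < 1) {S : Finset (Fin n)}
    (hS : S.card ≤ K) : IsUnit (gram Φ S).det := by
  have hinj : Function.Injective (colSub Φ S).mulVec := by
    intro y y' hyy'
    have hd : colSub Φ S *ᵥ (y - y') = 0 := by rw [mulVec_sub, hyy', sub_self]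
    have := h.lower_colSub hS (y - y')
    rw [hd, zero_dotProduct] at this
    have hle : (y - y') ⬝ᵥ (y - y') ≤ 0 := nonpos_of_mul_nonpos_right this (by linarith)
    have hnn : 0 ≤ (y - y') ⬝ᵥ (y - y') := by simpa using dotProduct_star_self_nonneg (y - y')
    exact sub_eq_zero.1 (dotProduct_self_eq_zero.1 (le_antisymm hle hnn))
  have hdef := PosDef.conjTranspose_mul_self _ hinj
  rw [conjTranspose_eq_transpose_of_trivial] at hdef
  exact (isUnit_iff_isUnit_det _).1 hdef.isUnit

lemma RIP.two_mul_mulVec_dotProduct_le (h : RIP Φ K δ) {x y : Fin n → ℝ} (hxy : x ⬝ᵥ y = 0)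
    (hadd : Ksparse K (x + y)) (hsub : Ksparse K (x - y)) :
    2 * ((Φ *ᵥ x) ⬝ᵥ (Φ *ᵥ y)) ≤ δ * (x ⬝ᵥ x + y ⬝ᵥ y) := by
  -- `‖x ± y‖² = ‖x‖² + ‖y‖²`, while `‖Φ(x + y)‖² - ‖Φ(x - y)‖² = 4 ⟪Φx, Φy⟫`.
  have hup := (h _ hadd).2
  have hlo := (h _ hsub).1
  simp only [sum_sq_eq_dotProduct_self, mulVec_add, mulVec_sub, add_dotProduct, dotProduct_add,
    sub_dotProduct, dotProduct_sub, dotProduct_comm y x, hxy, dotProduct_comm (Φ *ᵥ y)] at hup hlo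
  linarith

lemma RIP.colSub_transpose_mulVec_col_dotProduct_self_le (h : RIP Φ (K + 1) δ)
    {S : Finset (Fin n)} (hS : S.card ≤ K) {i : Fin n} (hi : i ∉ S) :
    ((colSub Φ S)ᵀ *ᵥ Φᵀ i) ⬝ᵥ ((colSub Φ S)ᵀ *ᵥ Φᵀ i) ≤ δ ^ 2 := by
  set v := (colSub Φ S)ᵀ *ᵥ Φᵀ i
  -- Test the polarization bound on the disjointly supported pair `v` (on `S`) and `s • eᵢ`.
  have key : ∀ s : ℝ, 2 * s * (v ⬝ᵥ v) ≤ δ * (v ⬝ᵥ v + s ^ 2) := by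
    intro s
    have hcard : (insert i S).card ≤ K + 1 := (Finset.card_insert_le i S).trans (by omega)
    have hsupp : ∀ j ∉ insert i S, extendByZero S v j = 0 ∧ (Pi.single i s : Fin n → ℝ) j = 0 := by
      intro j hj
      rw [Finset.mem_insert, not_or] at hj
      exact ⟨extendByZero_of_notMem v hj.2, Pi.single_eq_of_ne hj.1 _⟩
    have := h.two_mul_mulVec_dotProduct_le (x := extendByZero S v) (y := Pi.single i s)
      (by rw [dotProduct_single, extendByZero_of_notMem v hi, zero_mul])
      (ksparse_of_eq_zero_of_notMem _ hcard fun j hj => by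
        rw [Pi.add_apply, (hsupp j hj).1, (hsupp j hj).2, add_zero])
      (ksparse_of_eq_zero_of_notMem _ hcard fun j hj => by
        rw [Pi.sub_apply, (hsupp j hj).1, (hsupp j hj).2, sub_zero])
    have hcol : Φ *ᵥ Pi.single i s = s • Φᵀ i := by
      funext r
      simp [mul_comm]
    rwa [mulVec_extendByZero, extendByZero_dotProduct_self, hcol, dotProduct_smul,
      ← vecMul_transpose, ← dotProduct_mulVec, dotProduct_single, Pi.single_eq_same, smul_eq_mul,
      ← sq, ← mul_assoc] at this
  have hv : 0 ≤ v ⬝ᵥ v := by simpa using dotProduct_star_self_nonneg v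
  -- `s = δ` settles `δ > 0`; `s = 0` and `s = 1` force `v = 0` when `δ ≤ 0`.
  nlinarith [key 0, key 1, key δ]

lemma RIP.proj_mulVec_dotProduct_self_le (h : RIP Φ K δ) (hδ : δ < 1) {S : Finset (Fin n)}
    (hS : S.card ≤ K) (z : Fin m → ℝ) :
    (proj Φ S *ᵥ z) ⬝ᵥ (proj Φ S *ᵥ z) ≤
      ((colSub Φ S)ᵀ *ᵥ z) ⬝ᵥ ((colSub Φ S)ᵀ *ᵥ z) / (1 - δ) := by
  set A := colSub Φ S
  set v := Aᵀ *ᵥ z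
  set w := (Aᵀ * A)⁻¹ *ᵥ v
  have hproj : proj Φ S *ᵥ z = A *ᵥ w := by
    rw [proj, pinv, _root_.gram, ← mulVec_mulVec, ← mulVec_mulVec]
  have hnorm : (A *ᵥ w) ⬝ᵥ (A *ᵥ w) = w ⬝ᵥ v := by
    rw [mulVec_dotProduct_mulVec, mulVec_mulVec,
      mul_nonsing_inv (Aᵀ * A) (h.isUnit_det_gram hδ hS), one_mulVec]
  rw [hproj, hnorm]
  refine dotProduct_le_dotProduct_self_div (by linarith) ?_
  rw [← hnorm]
  exact h.lower_colSub hS w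

end RIP

theorem proj_column_bound_general {m n : ℕ} (Φ : Matrix (Fin m) (Fin n) ℝ)
    (L k : ℕ) (Tk : Finset (Fin n)) (hcard : Tk.card = L * k)
    (δ1 δ2 : ℝ) (hδ1 : δ1 < 1)
    (hR1 : RIP Φ (L * k) δ1) (hR2 : RIP Φ (L * k + 1) δ2)
    (i : Fin n) (hi : i ∉ Tk) :
    l2 ((proj Φ Tk).mulVec (fun r => Φ r i)) ^ 2 ≤ δ2 ^ 2 / (1 - δ1) := by
  have hcorr := hR2.colSub_transpose_mulVec_col_dotProduct_self_le hcard.le hi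
  have h1δ : 0 < 1 - δ1 := by linarith
  rw [l2_sq]
  calc _ ≤ _ := hR1.proj_mulVec_dotProduct_self_le hδ1 hcard.le (fun r => Φ r i)
    _ ≤ δ2 ^ 2 / (1 - δ1) := div_le_div_of_nonneg_right hcorr h1δ.le

/-- Bound on the projection of a column onto the current active span:
`‖P_{T^k} φ_i‖₂² ≤ δ_{Lk+1}²/(1-δ_{Lk})` for `i ∉ T^k`. -/
theorem proj_column_bound {m n : ℕ} (Φ : Matrix (Fin m) (Fin n) ℝ)
    (hunit : ∀ j, ∑ r, Φ r j ^ 2 = 1)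
    (L k : ℕ) (Tk : Finset (Fin n)) (hcard : Tk.card = L * k)
    (δ1 δ2 : ℝ) (hδ0 : 0 ≤ δ2) (hle : δ2 ≤ δ1) (hδ1 : δ1 < 1)
    (hR1 : RIP Φ (L * k) δ1) (hR2 : RIP Φ (L * k + 1) δ2)
    (i : Fin n) (hi : i ∉ Tk) :
    l2 ((proj Φ Tk).mulVec (fun r => Φ r i)) ^ 2 ≤ δ2 ^ 2 / (1 - δ1) :=
  proj_column_bound_general Φ L k Tk hcard δ1 δ2 hδ1 hR1 hR2 i hi
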